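/- Let n ≥ 1 and let U = U₁ ⊗ U₂ ⊗ ⋯ ⊗ Uₙ and V = V₁ ⊗ V₂ ⊗ ⋯ ⊗ Vₙ, where each U_j and V_j is a 2 × 2 unitary matrix. Then C_LHST(U,V) = 1 − (1/n) Σ_{j=1}^n r_j, where r_j := (1/4)|Tr(V_j† U_j)|²; in particular, for each j the entanglement fidelity satisfies F_e^{(j)} = r_j. -/

import Mathlib

/-!
For a product `W = M₁ ⊗ ⋯ ⊗ Mₙ`, the channel `E_j` is `ρ ↦ c • M_j ρ M_j†`, where
`c = ∏_{k ≠ j} Tr(M_k M_k†)/2` is what the maximally mixed state on the other qubits leaves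
behind after the partial trace. With `M_k = U_k V_k†` unitary, `c = 1`, so `E_j` is conjugation
by `M_j`, and the entanglement fidelity of conjugation by a `2 × 2` matrix `A` is `|Tr A|²/4`;
finally `Tr(U_j V_j†) = Tr(V_j† U_j)`.
-/

open Matrix Kronecker Complex

noncomputable section

/-- The Hilbert-Schmidt test cost `C_HST(U,V) = 1 - |Tr(V†U)|²/d²` for `d × d` matrices. -/
def CHSTd (d : ℕ) (U V : Matrix (Fin d) (Fin d) ℂ) : ℝ :=
  1 - ‖(Vᴴ * U).trace‖ ^ 2 / (d : ℝ) ^ 2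

/-- The Hilbert-Schmidt test cost for unitaries on `n` qubits (`d = 2^n`). -/
def CHST (n : ℕ) (U V : Matrix (Fin n → Fin 2) (Fin n → Fin 2) ℂ) : ℝ :=
  1 - ‖(Vᴴ * U).trace‖ ^ 2 / ((2 : ℝ) ^ n) ^ 2

/-- The local channel `E_j(ρ) = Tr_{j̄}[ W (ρ_(j) ⊗ I/2^(n-1)) W† ]`, where `ρ` is placed on
qubit `j`, the maximally mixed state on the other qubits, and the partial trace is over all
qubits except `j`.  (The sum over `r` double-counts the assignments of the qubits other than
`j`, whence the extra factor `1/2`.) -/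
def Ej (n : ℕ) (j : Fin n) (W : Matrix (Fin n → Fin 2) (Fin n → Fin 2) ℂ)
    (ρ : Matrix (Fin 2) (Fin 2) ℂ) : Matrix (Fin 2) (Fin 2) ℂ :=
  Matrix.of fun a b =>
    (1 / 2 ^ (n - 1) : ℂ) * (1 / 2) *
      ∑ r : Fin n → Fin 2, ∑ s : Fin n → Fin 2, ∑ t : Fin n → Fin 2,
        (if Function.update s j 0 = Function.update t j 0 then
          W (Function.update r j a) s * ρ (s j) (t j) * star (W (Function.update r j b) t)
        else 0)

/-- The two-qubit maximally entangled state `|Φ₂⁺⟩ = (|00⟩+|11⟩)/√2`. -/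
def phi2 : (Fin 2 × Fin 2) → ℂ := fun p => if p.1 = p.2 then ((1 / Real.sqrt 2 : ℝ) : ℂ) else 0

/-- The projector `|Φ₂⁺⟩⟨Φ₂⁺|`. -/
def phi2Proj : Matrix (Fin 2 × Fin 2) (Fin 2 × Fin 2) ℂ :=
  Matrix.of fun p q => if p.1 = p.2 ∧ q.1 = q.2 then (1 / 2 : ℂ) else 0

/-- `(E ⊗ id)(ρ)` for a map `E` on one-qubit matrices and a two-qubit matrix `ρ`. -/
def tensorId (E : Matrix (Fin 2) (Fin 2) ℂ → Matrix (Fin 2) (Fin 2) ℂ)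
    (ρ : Matrix (Fin 2 × Fin 2) (Fin 2 × Fin 2) ℂ) :
    Matrix (Fin 2 × Fin 2) (Fin 2 × Fin 2) ℂ :=
  Matrix.of fun p q => ∑ a : Fin 2, ∑ b : Fin 2,
    ρ (a, p.2) (b, q.2) * E (Matrix.single a b 1) p.1 q.1

/-- The entanglement fidelity `F_e^(j) = ⟨Φ₂⁺|(E_j ⊗ id)(|Φ₂⁺⟩⟨Φ₂⁺|)|Φ₂⁺⟩`
(as a complex number), with `W = U V†`. -/
def FeC (n : ℕ) (j : Fin n) (U V : Matrix (Fin n → Fin 2) (Fin n → Fin 2) ℂ) : ℂ :=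
  star phi2 ⬝ᵥ (tensorId (Ej n j (U * Vᴴ)) phi2Proj).mulVec phi2

/-- The entanglement fidelity `F_e^(j)` (a real number). -/
def Fe (n : ℕ) (j : Fin n) (U V : Matrix (Fin n → Fin 2) (Fin n → Fin 2) ℂ) : ℝ :=
  (FeC n j U V).re

/-- The local Hilbert-Schmidt cost for qubit `j`: `C_LHST^(j)(U,V) = 1 - F_e^(j)`. -/
def CLHSTj (n : ℕ) (j : Fin n) (U V : Matrix (Fin n → Fin 2) (Fin n → Fin 2) ℂ) : ℝ :=
  1 - Fe n j U V

/-- The local Hilbert-Schmidt cost `C_LHST(U,V) = (1/n) Σ_j C_LHST^(j)(U,V)`. -/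
def CLHST (n : ℕ) (U V : Matrix (Fin n → Fin 2) (Fin n → Fin 2) ℂ) : ℝ :=
  (1 / n : ℝ) * ∑ j : Fin n, CLHSTj n j U V

end

noncomputable section

/-- The `n`-fold tensor product `M₁ ⊗ M₂ ⊗ ⋯ ⊗ Mₙ` of one-qubit matrices, as a matrix on
the `n`-qubit register indexed by `Fin n → Fin 2`. -/
def tensAll (n : ℕ) (M : Fin n → Matrix (Fin 2) (Fin 2) ℂ) :
    Matrix (Fin n → Fin 2) (Fin n → Fin 2) ℂ :=
  Matrix.of fun s t => ∏ j : Fin n, M j (s j) (t j)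

theorem trace_mul_conjTranspose_self {m l R : Type*} [Fintype m] [Fintype l]
    [NonUnitalNonAssocSemiring R] [Star R] (A : Matrix m l R) :
    (A * Aᴴ).trace = ∑ x, ∑ y, A x y * star (A x y) := by
  simp only [Matrix.trace, Matrix.diag, Matrix.mul_apply, Matrix.conjTranspose_apply]

theorem trace_mul_conjTranspose_of_mem_unitaryGroup {m : Type*} [Fintype m] [DecidableEq m]
    {A : Matrix m m ℂ} (hA : A ∈ Matrix.unitaryGroup m ℂ) :
    (A * Aᴴ).trace = Fintype.card m := by
  rw [← Matrix.star_eq_conjTranspose, Matrix.mem_unitaryGroup_iff.mp hA, Matrix.trace_one]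

theorem sum_sum_prod_eq_prod_sum_sum {ι κ R : Type*} [Fintype ι] [DecidableEq ι]
    [Fintype κ] [CommSemiring R] (f : ι → κ → κ → R) :
    ∑ w : ι → κ, ∑ u : ι → κ, ∏ i, f i (w i) (u i) = ∏ i, ∑ x, ∑ y, f i x y := by
  simp_rw [← Fintype.prod_sum]
  exact (Fintype.prod_sum fun i x => ∑ y, f i x y).symm

theorem entanglementFidelity_conj (A : Matrix (Fin 2) (Fin 2) ℂ) :
    star phi2 ⬝ᵥ (tensorId (fun ρ => A * ρ * Aᴴ) phi2Proj) *ᵥ phi2 =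
      A.trace * star A.trace / 4 := by
  have hsqrt : ((Real.sqrt 2 : ℝ) : ℂ)⁻¹ * ((Real.sqrt 2 : ℝ) : ℂ)⁻¹ = 2⁻¹ := by
    rw [← mul_inv, ← Complex.ofReal_mul, Real.mul_self_sqrt zero_le_two, Complex.ofReal_ofNat]
  simp [dotProduct, Matrix.mulVec, tensorId, phi2, phi2Proj, Fintype.sum_prod_type,
    Fin.sum_univ_two, Matrix.mul_apply, Matrix.single_apply, Matrix.trace]
  linear_combination (A 0 0 + A 1 1) * (starRingEnd ℂ (A 0 0) + starRingEnd ℂ (A 1 1)) / 2 * hsqrt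

section SplitAt

variable {α β : Type*} [DecidableEq α] (i : α)

theorem funSplitAt_symm_apply_self (c : β) (u : {k // k ≠ i} → β) :
    (Equiv.funSplitAt i β).symm (c, u) i = c := by
  simp [Equiv.funSplitAt, Equiv.piSplitAt]

theorem funSplitAt_symm_apply_of_ne {k : α} (hk : k ≠ i) (c : β) (u : {k // k ≠ i} → β) :
    (Equiv.funSplitAt i β).symm (c, u) k = u ⟨k, hk⟩ := by
  simp [Equiv.funSplitAt, Equiv.piSplitAt, hk]

theorem update_funSplitAt_symm (c c' : β) (u : {k // k ≠ i} → β) :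
    Function.update ((Equiv.funSplitAt i β).symm (c, u)) i c' =
      (Equiv.funSplitAt i β).symm (c', u) := by
  funext k
  by_cases hk : k = i
  · subst hk; simp
  · simp [Function.update_of_ne hk, funSplitAt_symm_apply_of_ne i hk]

theorem sum_eq_sum_funSplitAt_symm [Fintype α] [Fintype β] {R : Type*} [AddCommMonoid R]
    (f : (α → β) → R) :
    ∑ s, f s = ∑ c : β, ∑ u : {k // k ≠ i} → β, f ((Equiv.funSplitAt i β).symm (c, u)) := by
  rw [← Equiv.sum_comp (Equiv.funSplitAt i β).symm f, Fintype.sum_prod_type]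

end SplitAt

section Qubits

variable {n : ℕ}

theorem tensAll_mul (A B : Fin n → Matrix (Fin 2) (Fin 2) ℂ) :
    tensAll n A * tensAll n B = tensAll n fun k => A k * B k := by
  ext s t
  simp only [Matrix.mul_apply, tensAll, Matrix.of_apply, ← Finset.prod_mul_distrib]
  exact (Fintype.prod_sum fun k c => A k (s k) c * B k c (t k)).symm

theorem conjTranspose_tensAll (A : Fin n → Matrix (Fin 2) (Fin 2) ℂ) :
    (tensAll n A)ᴴ = tensAll n fun k => (A k)ᴴ := by
  ext s t
  simp [tensAll, star_prod]

variable (j : Fin n)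

theorem tensAll_funSplitAt_symm (M : Fin n → Matrix (Fin 2) (Fin 2) ℂ) (c c' : Fin 2)
    (u v : {k // k ≠ j} → Fin 2) :
    tensAll n M ((Equiv.funSplitAt j (Fin 2)).symm (c, u))
        ((Equiv.funSplitAt j (Fin 2)).symm (c', v)) =
      M j c c' * ∏ k : {k // k ≠ j}, M k (u k) (v k) := by
  rw [tensAll, Matrix.of_apply, Fintype.prod_eq_mul_prod_subtype_ne _ j,
    funSplitAt_symm_apply_self, funSplitAt_symm_apply_self]
  congr 1
  exact Finset.prod_congr rfl fun k _ => by
    rw [funSplitAt_symm_apply_of_ne j k.2, funSplitAt_symm_apply_of_ne j k.2]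

theorem Ej_tensAll (M : Fin n → Matrix (Fin 2) (Fin 2) ℂ) (ρ : Matrix (Fin 2) (Fin 2) ℂ) :
    Ej n j (tensAll n M) ρ =
      (∏ k : {k // k ≠ j}, (M k * (M k)ᴴ).trace / 2) • (M j * ρ * (M j)ᴴ) := by
  have hcard : Fintype.card {k // k ≠ j} = n - 1 := by simp [Fintype.card_subtype_compl]
  have hrest : ∑ w : {k // k ≠ j} → Fin 2, ∑ u : {k // k ≠ j} → Fin 2,
      (∏ k : {k // k ≠ j}, M k (w k) (u k)) * star (∏ k : {k // k ≠ j}, M k (w k) (u k)) =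
        ∏ k : {k // k ≠ j}, (M k * (M k)ᴴ).trace := by
    simp only [star_prod, ← Finset.prod_mul_distrib, trace_mul_conjTranspose_self]
    exact sum_sum_prod_eq_prod_sum_sum fun (k : {k // k ≠ j}) x y => M k x y * star (M k x y)
  ext a b
  have hfactor : ∀ Q : ({k // k ≠ j} → Fin 2) → ℂ,
      ∑ c, ∑ u, ∑ c', M j a c * Q u * ρ c c' * star (M j b c' * Q u) =
        ∑ u, Q u * star (Q u) * (M j * ρ * (M j)ᴴ) a b := by
    intro Q
    rw [Finset.sum_comm]
    refine Finset.sum_congr rfl fun u _ => ?_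
    simp only [Matrix.mul_apply, Matrix.conjTranspose_apply, Finset.mul_sum, Finset.sum_mul]
    rw [Finset.sum_comm]
    exact Finset.sum_congr rfl fun _ _ => Finset.sum_congr rfl fun _ _ => by
      rw [star_mul']; ring
  rw [Ej, Matrix.of_apply]
  simp only [sum_eq_sum_funSplitAt_symm j, update_funSplitAt_symm, EmbeddingLike.apply_eq_iff_eq,
    Prod.mk.injEq, true_and, funSplitAt_symm_apply_self, tensAll_funSplitAt_symm,
    Finset.sum_ite_eq, Finset.mem_univ, if_true, hfactor]
  simp only [Finset.sum_const, Finset.card_univ, Fintype.card_fin, nsmul_eq_mul,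
    ← Finset.sum_mul, hrest, Matrix.smul_apply, smul_eq_mul, Finset.prod_div_distrib,
    Finset.prod_const, hcard]
  push_cast
  ring

theorem Ej_tensAll_of_mem_unitaryGroup {M : Fin n → Matrix (Fin 2) (Fin 2) ℂ}
    (hM : ∀ k, M k ∈ Matrix.unitaryGroup (Fin 2) ℂ) (ρ : Matrix (Fin 2) (Fin 2) ℂ) :
    Ej n j (tensAll n M) ρ = M j * ρ * (M j)ᴴ := by
  simp [Ej_tensAll, trace_mul_conjTranspose_of_mem_unitaryGroup (hM _)]

theorem Fe_tensAll_of_mem_unitaryGroup {Us Vs : Fin n → Matrix (Fin 2) (Fin 2) ℂ}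
    (hU : ∀ k, Us k ∈ Matrix.unitaryGroup (Fin 2) ℂ)
    (hV : ∀ k, Vs k ∈ Matrix.unitaryGroup (Fin 2) ℂ) :
    Fe n j (tensAll n Us) (tensAll n Vs) = (1 / 4 : ℝ) * ‖((Vs j)ᴴ * Us j).trace‖ ^ 2 := by
  have hW : ∀ k, Us k * (Vs k)ᴴ ∈ Matrix.unitaryGroup (Fin 2) ℂ := fun k =>
    mul_mem (hU k) (Matrix.star_eq_conjTranspose (Vs k) ▸ Unitary.star_mem (hV k))
  have hE : Ej n j (tensAll n fun k => Us k * (Vs k)ᴴ) =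
      fun ρ => Us j * (Vs j)ᴴ * ρ * (Us j * (Vs j)ᴴ)ᴴ :=
    funext (Ej_tensAll_of_mem_unitaryGroup j hW)
  rw [Fe, FeC, conjTranspose_tensAll, tensAll_mul, hE, entanglementFidelity_conj,
    Matrix.trace_mul_comm, Complex.star_def, Complex.mul_conj',
    ← Complex.ofReal_pow, ← Complex.ofReal_ofNat, ← Complex.ofReal_div, Complex.ofReal_re]
  ring

theorem CLHST_eq_one_sub_mean_Fe (hn : n ≠ 0)
    (U V : Matrix (Fin n → Fin 2) (Fin n → Fin 2) ℂ) :
    CLHST n U V = 1 - (1 / n : ℝ) * ∑ j, Fe n j U V := by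
  simp only [CLHST, CLHSTj, Finset.sum_sub_distrib, Finset.sum_const, Finset.card_univ,
    Fintype.card_fin, nsmul_eq_mul, mul_one]
  field_simp

end Qubits

theorem stmt10 (n : ℕ) (hn : 1 ≤ n) (Us Vs : Fin n → Matrix (Fin 2) (Fin 2) ℂ)
    (hU : ∀ j, Us j ∈ Matrix.unitaryGroup (Fin 2) ℂ)
    (hV : ∀ j, Vs j ∈ Matrix.unitaryGroup (Fin 2) ℂ) :
    CLHST n (tensAll n Us) (tensAll n Vs) =
      1 - (1 / n : ℝ) * ∑ j : Fin n, (1 / 4 : ℝ) * ‖((Vs j)ᴴ * Us j).trace‖ ^ 2 ∧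
    ∀ j : Fin n, Fe n j (tensAll n Us) (tensAll n Vs) =
      (1 / 4 : ℝ) * ‖((Vs j)ᴴ * Us j).trace‖ ^ 2 := by
  have hFe j := Fe_tensAll_of_mem_unitaryGroup j hU hV
  refine ⟨?_, hFe⟩
  rw [CLHST_eq_one_sub_mean_Fe (by omega), Finset.sum_congr rfl fun j _ => hFe j]

end
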